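/- Let n ≥ 3 be an odd integer and let m = (n−1)/2. Then for every x ∈ ℝⁿ with x ≠ 0, the m-fold iterated Laplacian of the function v(x) = log(1/|x|) satisfies (−1)^m Δ^m (log(1/|x|)) = (n−2)! · |x|^{−(n−1)}; equivalently, (-Δ)^{(n−1)/2} log(1/|x|) = γₙ · (((n−3)/2)! / (2π^{(n+1)/2})) · |x|^{−(n−1)}, where γₙ = ((n−1)!/2)|Sⁿ| and |Sⁿ| = 2π^{(n+1)/2}/Γ((n+1)/2). -/

import Mathlib

open MeasureTheory

/-- The Euclidean Laplacian `Δ f = Σᵢ ∂²f/∂xᵢ²` of a function `f : ℝⁿ → ℝ`. -/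
noncomputable def lap {n : ℕ} (f : EuclideanSpace ℝ (Fin n) → ℝ)
    (x : EuclideanSpace ℝ (Fin n)) : ℝ :=
  ∑ i : Fin n,
    fderiv ℝ (fun y => fderiv ℝ f y (EuclideanSpace.single i 1)) x (EuclideanSpace.single i 1)

/-- The volume of the unit `n`-sphere, `|Sⁿ| = 2 π^{(n+1)/2} / Γ((n+1)/2)`. -/
noncomputable def sphereVol (n : ℕ) : ℝ :=
  2 * Real.pi ^ ((n + 1 : ℝ) / 2) / Real.Gamma ((n + 1 : ℝ) / 2)

/-- `γₙ = ((n-1)!/2) |Sⁿ|`. -/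
noncomputable def gammaN (n : ℕ) : ℝ := (Nat.factorial (n - 1) : ℝ) / 2 * sphereVol n

/-!
For a radial function `f y = F (‖y‖²)` one has `Δ f = 4 s F''(s) + 2 n F'(s)` at `s = ‖y‖²`.
Hence `Δ log (1/‖y‖) = (2 - n) ‖y‖⁻²` and `Δ (‖y‖²)^p = 2p (2p - 2 + n) (‖y‖²)^(p-1)`, so by
induction `(-1)^k Δ^k log (1/‖y‖) = 2^(k-1) (k-1)! (n-2)(n-4)⋯(n-2k) ‖y‖^(-2k)`. For `n = 2m + 1`
and `k = m` the constant is `(2m-2)‼ (2m-1)‼ = (2m-1)!`.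
-/

open Filter Topology Finset Nat

lemma hasFDerivAt_comp_norm_sq {E : Type*} [NormedAddCommGroup E] [InnerProductSpace ℝ E]
    {F : ℝ → ℝ} {F' : ℝ} {y : E} (hF : HasDerivAt F F' (‖y‖ ^ 2)) :
    HasFDerivAt (fun z => F (‖z‖ ^ 2)) (F' • 2 • innerSL ℝ y) y :=
  hF.comp_hasFDerivAt y (by simpa using (hasFDerivAt_id y).norm_sq)

section Laplacian

variable {n : ℕ}

lemma lap_congr {f g : EuclideanSpace ℝ (Fin n) → ℝ} {x : EuclideanSpace ℝ (Fin n)}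
    (h : f =ᶠ[𝓝 x] g) : lap f x = lap g x := by
  refine sum_congr rfl fun i _ => ?_
  have hpartial : (fun y => fderiv ℝ f y (EuclideanSpace.single i 1)) =ᶠ[𝓝 x]
      fun y => fderiv ℝ g y (EuclideanSpace.single i 1) := by
    filter_upwards [h.eventually_nhds] with y hy
    rw [EventuallyEq.fderiv_eq hy]
  rw [hpartial.fderiv_eq]

lemma lap_comp_norm_sq {F F' F'' : ℝ → ℝ}
    (hF : ∀ s, 0 < s → HasDerivAt F (F' s) s) (hF' : ∀ s, 0 < s → HasDerivAt F' (F'' s) s)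
    {x : EuclideanSpace ℝ (Fin n)} (hx : x ≠ 0) :
    lap (fun y => F (‖y‖ ^ 2)) x = 4 * ‖x‖ ^ 2 * F'' (‖x‖ ^ 2) + 2 * n * F' (‖x‖ ^ 2) := by
  have hpartial (i : Fin n) : (fun y => fderiv ℝ (fun z => F (‖z‖ ^ 2)) y
      (EuclideanSpace.single i 1)) =ᶠ[𝓝 x] fun y => F' (‖y‖ ^ 2) * (2 * y i) := by
    filter_upwards [eventually_ne_nhds hx] with y hy
    rw [(hasFDerivAt_comp_norm_sq (hF _ (by positivity))).fderiv]
    simp [EuclideanSpace.inner_single_right]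
  have hsecond (i : Fin n) : fderiv ℝ (fun y => fderiv ℝ (fun z => F (‖z‖ ^ 2)) y
      (EuclideanSpace.single i 1)) x (EuclideanSpace.single i 1)
        = 4 * F'' (‖x‖ ^ 2) * x i ^ 2 + 2 * F' (‖x‖ ^ 2) := by
    have h : HasFDerivAt (fun y => F' (‖y‖ ^ 2) * (2 * y i)) _ x :=
      (hasFDerivAt_comp_norm_sq (hF' _ (by positivity))).mul
        (((EuclideanSpace.proj i : EuclideanSpace ℝ (Fin n) →L[ℝ] ℝ).hasFDerivAt (x := x)).const_mul
          (2 : ℝ))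
    rw [(hpartial i).fderiv_eq, h.fderiv]
    simp only [add_apply, smul_apply, PiLp.proj_apply,
      PiLp.single_eq_same, coe_innerSL_apply, EuclideanSpace.inner_single_right,
      Real.ringHom_apply, smul_eq_mul, nsmul_eq_mul]
    ring
  simp only [lap, hsecond, sum_add_distrib, ← mul_sum, ← EuclideanSpace.real_norm_sq_eq, sum_const,
    Finset.card_fin, nsmul_eq_mul]
  ring

lemma lap_const_mul_rpow_norm_sq (c p : ℝ) {x : EuclideanSpace ℝ (Fin n)} (hx : x ≠ 0) :
    lap (fun y => c * (‖y‖ ^ 2) ^ p) x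
      = c * (2 * p * (2 * p - 2 + n)) * (‖x‖ ^ 2) ^ (p - 1) := by
  have hs : 0 < ‖x‖ ^ 2 := by positivity
  rw [lap_comp_norm_sq (fun s hs => ((Real.hasDerivAt_rpow_const (Or.inl hs.ne')).const_mul c))
    (fun s hs => ((Real.hasDerivAt_rpow_const (Or.inl hs.ne')).const_mul p).const_mul c) hx,
    Real.rpow_sub_one hs.ne' (p - 1)]
  field_simp
  ring

lemma lap_log_inv_norm {x : EuclideanSpace ℝ (Fin n)} (hx : x ≠ 0) :
    lap (fun y => Real.log (1 / ‖y‖)) x = (2 - n) * (‖x‖ ^ 2) ^ (-1 : ℝ) := by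
  have hs : 0 < ‖x‖ ^ 2 := by positivity
  have hlog : (fun y : EuclideanSpace ℝ (Fin n) => Real.log (1 / ‖y‖))
      = fun y => -(1 / 2) * Real.log (‖y‖ ^ 2) := by
    ext y
    rw [one_div, Real.log_inv, Real.log_pow]
    ring
  rw [hlog, lap_comp_norm_sq (fun s hs => (Real.hasDerivAt_log hs.ne').const_mul _)
    (fun s hs => (hasDerivAt_inv hs.ne').const_mul _) hx, Real.rpow_neg_one]
  field_simp
  ring

theorem iterate_lap_log_inv_norm (k : ℕ) {x : EuclideanSpace ℝ (Fin n)} (hx : x ≠ 0) :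
    lap^[k + 1] (fun y => Real.log (1 / ‖y‖)) x
      = (-1) ^ (k + 1) * 2 ^ k * k ! * (∏ i ∈ range (k + 1), ((n : ℝ) - 2 * (i + 1)))
        * (‖x‖ ^ 2) ^ (-((k : ℝ) + 1)) := by
  induction k generalizing x with
  | zero =>
    rw [Function.iterate_one, lap_log_inv_norm hx]
    norm_num
  | succ k ih =>
    have hnear : lap^[k + 1] (fun y => Real.log (1 / ‖y‖)) =ᶠ[𝓝 x] _ :=
      eventually_ne_nhds hx |>.mono fun y hy => ih hy
    have hexp : -((k : ℝ) + 1) - 1 = -(((k + 1 : ℕ) : ℝ) + 1) := by push_cast; ring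
    rw [Function.iterate_succ_apply', lap_congr hnear, lap_const_mul_rpow_norm_sq _ _ hx, hexp,
      prod_range_succ _ (k + 1), factorial_succ]
    push_cast
    ring

end Laplacian

lemma prod_odd_sub_eq_doubleFactorial (j : ℕ) :
    ∏ i ∈ range (j + 1), (((2 * j + 3 : ℕ) : ℝ) - 2 * (i + 1)) = ((2 * j + 1)‼ : ℕ) := by
  rw [prod_range_succ, doubleFactorial_eq_prod_odd, Nat.cast_prod,
    ← prod_range_reflect (fun i => ((2 * (i + 1) + 1 : ℕ) : ℝ))]
  have hlast : ((2 * j + 3 : ℕ) : ℝ) - 2 * ((j : ℝ) + 1) = 1 := by push_cast; ring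
  rw [hlast, mul_one]
  refine prod_congr rfl fun i hi => ?_
  replace hi := mem_range.mp hi
  rw [show 2 * (j - 1 - i + 1) + 1 = 2 * j + 3 - 2 * (i + 1) by omega, Nat.cast_sub (by omega)]
  push_cast
  ring

lemma two_pow_mul_factorial_mul_doubleFactorial (j : ℕ) :
    2 ^ j * j ! * (2 * j + 1)‼ = (2 * j + 1)! := by
  rw [factorial_eq_mul_doubleFactorial, doubleFactorial_two_mul]
  ring

lemma gammaN_mul_factorial_div (j : ℕ) :
    gammaN (2 * j + 3) * (j ! / (2 * Real.pi ^ ((((2 * j + 3 : ℕ) : ℝ) + 1) / 2)))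
      = (2 * j + 1)! := by
  have hexp : (((2 * j + 3 : ℕ) : ℝ) + 1) / 2 = ((j + 1 : ℕ) : ℝ) + 1 := by push_cast; ring
  rw [gammaN, sphereVol, hexp, Real.Gamma_nat_eq_factorial,
    show 2 * j + 3 - 1 = 2 * j + 1 + 1 by omega, factorial_succ (2 * j + 1), factorial_succ j]
  push_cast
  field_simp
  ring

theorem iterated_laplacian_of_log
    (n : ℕ) (hn : 3 ≤ n) (hodd : Odd n) (m : ℕ) (hm : m = (n - 1) / 2) :
    ∀ x : EuclideanSpace ℝ (Fin n), x ≠ 0 →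
      (-1 : ℝ) ^ m * (lap^[m] (fun y : EuclideanSpace ℝ (Fin n) => Real.log (1 / ‖y‖))) x
          = (Nat.factorial (n - 2) : ℝ) * (‖x‖ ^ (n - 1))⁻¹ ∧
      (-1 : ℝ) ^ m * (lap^[m] (fun y : EuclideanSpace ℝ (Fin n) => Real.log (1 / ‖y‖))) x
          = gammaN n * ((Nat.factorial ((n - 3) / 2) : ℝ) / (2 * Real.pi ^ ((n + 1 : ℝ) / 2)))
              * (‖x‖ ^ (n - 1))⁻¹ := by
  intro x hx
  obtain ⟨j, rfl⟩ : ∃ j, n = 2 * j + 3 := by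
    obtain ⟨t, rfl⟩ := hodd
    exact ⟨t - 1, by omega⟩
  obtain rfl : m = j + 1 := by omega
  have hpow : (‖x‖ ^ 2) ^ (-((j : ℝ) + 1)) = (‖x‖ ^ (2 * j + 2))⁻¹ := by
    rw [Real.rpow_neg (by positivity), ← Nat.cast_succ, Real.rpow_natCast, ← pow_mul, mul_add_one]
  have hsign : (-1 : ℝ) ^ (j + 1) * (-1) ^ (j + 1) = 1 := by rw [← mul_pow]; norm_num
  have hvalue : (-1) ^ (j + 1) * lap^[j + 1] (fun y => Real.log (1 / ‖y‖)) x
      = (2 * j + 1)! * (‖x‖ ^ (2 * j + 2))⁻¹ := by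
    rw [iterate_lap_log_inv_norm j hx, prod_odd_sub_eq_doubleFactorial, hpow,
      ← two_pow_mul_factorial_mul_doubleFactorial]
    push_cast
    linear_combination (2 ^ j * j ! * (2 * j + 1)‼ * (‖x‖ ^ (2 * j + 2))⁻¹ : ℝ) * hsign
  rw [show 2 * j + 3 - 2 = 2 * j + 1 by omega, show 2 * j + 3 - 1 = 2 * j + 2 by omega,
    show (2 * j + 3 - 3) / 2 = j by omega, gammaN_mul_factorial_div]
  exact ⟨hvalue, hvalue⟩
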